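/- Let n be a positive integer, let S = [[λ, μ], [conj(μ), conj(λ)]] be a complex symplectic 2n×2n matrix of this block form (Sᵀ J S = J with J = [[0, I], [−I, 0]]), and let A be a complex symmetric n×n matrix with I − AᴴA positive definite. Set Λ = (I − AᴴA)^{−1/2}, Λ̄ = (I − AAᴴ)^{−1/2}, and ι(A) = [[Λ, AᴴΛ̄], [AΛ, Λ̄]]. Then λ + μA is invertible, the product S·ι(A) again has invertible upper-left block, and h(S·ι(A)) = (conj(λ)A + conj(μ))(μA + λ)⁻¹, where h applied to a block matrix [[a, b], [c, d]] with a invertible means c·a⁻¹. -/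

import Mathlib

open Matrix
open scoped ComplexOrder

/-!
For `S = [[λ, μ], [μ̄, λ̄]]` the symplectic relations `Sᵀ J S = J` amount to `S` preserving the
Hermitian form `diag(I, -I)`. Evaluated on the columns of `[I; A]`, which `S` maps to
`[λ + μA; μ̄ + λ̄A]`, this gives
`(λ + μA)ᴴ(λ + μA) - (μ̄ + λ̄A)ᴴ(μ̄ + λ̄A) = I - AᴴA`, which is positive definite, so `λ + μA`
is invertible. The left block column of `S ι(A)` is `[(λ + μA)Λ; (μ̄ + λ̄A)Λ]`, and `Λ` cancels
in `h`.
-/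

theorem conjTranspose_map_starRingEnd {m n α : Type*} [CommSemiring α] [StarRing α]
    (M : Matrix m n α) : (M.map (starRingEnd α))ᴴ = Mᵀ := by
  ext i j
  simp [starRingEnd_apply]

section Symplectic

variable {l R : Type*} [Fintype l] [DecidableEq l] [CommRing R]

theorem mem_symplecticGroup_iff_transpose_mul_mul {S : Matrix (l ⊕ l) (l ⊕ l) R} :
    S ∈ symplecticGroup l R ↔ Sᵀ * fromBlocks 0 1 (-1) 0 * S = fromBlocks 0 1 (-1) 0 := by
  have hJ : fromBlocks (0 : Matrix l l R) 1 (-1) 0 = -J l R := by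
    simp [J, fromBlocks_neg]
  rw [SymplecticGroup.mem_iff', hJ, Matrix.mul_neg, Matrix.neg_mul, neg_inj]

variable [StarRing R]

theorem conjTranspose_mul_self_sub_eq_one_sub_of_mem_symplecticGroup (lam mu A : Matrix l l R)
    (hS : fromBlocks lam mu (mu.map (starRingEnd R)) (lam.map (starRingEnd R)) ∈
      symplecticGroup l R) :
    (lam + mu * A)ᴴ * (lam + mu * A) -
        (mu.map (starRingEnd R) + lam.map (starRingEnd R) * A)ᴴ *
          (mu.map (starRingEnd R) + lam.map (starRingEnd R) * A) =
      1 - Aᴴ * A := by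
  obtain ⟨h₁, h₂, h₃⟩ := SymplecticGroup.fromBlocks_mem_iff.1 hS
  have h₃' := congrArg transpose h₃
  simp only [transpose_sub, transpose_mul, transpose_transpose, transpose_one] at h₃'
  have hlam : (lam.map (starRingEnd R))ᵀ = lamᴴ := rfl
  have hmu : (mu.map (starRingEnd R))ᵀ = muᴴ := rfl
  simp only [hlam, hmu] at h₁ h₂ h₃ h₃'
  simp only [conjTranspose_add, conjTranspose_mul, conjTranspose_map_starRingEnd]
  -- each bracket is given by one of the symplectic relations
  calc _ = (lamᴴ * lam - muᵀ * mu.map (starRingEnd R))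
          + (lamᴴ * mu - muᵀ * lam.map (starRingEnd R)) * A
          + Aᴴ * (muᴴ * lam - lamᵀ * mu.map (starRingEnd R))
          - Aᴴ * (lamᵀ * lam.map (starRingEnd R) - muᴴ * mu) * A := by noncomm_ring
    _ = 1 - Aᴴ * A := by
      rw [h₃, ← h₁, ← h₂, h₃']
      noncomm_ring

end Symplectic

theorem isUnit_of_conjTranspose_mul_self_sub_posDef {n K : Type*} [Fintype n] [DecidableEq n]
    [Field K] [PartialOrder K] [StarRing K] [StarOrderedRing K] {B C : Matrix n n K}
    (h : (Bᴴ * B - Cᴴ * C).PosDef) : IsUnit B := by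
  have hBB : (Bᴴ * B).PosDef := by
    simpa using h.add_posSemidef (posSemidef_conjTranspose_mul_self C)
  rw [isUnit_iff_isUnit_det]
  have hdet := (isUnit_iff_isUnit_det _).1 hBB.isUnit
  rw [det_mul] at hdet
  exact isUnit_of_mul_isUnit_right hdet

section Blocks

variable {l m R : Type*} [Fintype l] [Semiring R]

theorem toBlocks₁₁_fromBlocks_mul_fromBlocks (a b c d : Matrix l l R) (P : Matrix l m R)
    (Q R' A : Matrix l l R) :
    (fromBlocks a b c d * fromBlocks P Q (A * P) R').toBlocks₁₁ = (a + b * A) * P := by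
  simp [fromBlocks_multiply, Matrix.add_mul, Matrix.mul_assoc]

theorem toBlocks₂₁_fromBlocks_mul_fromBlocks (a b c d : Matrix l l R) (P : Matrix l m R)
    (Q R' A : Matrix l l R) :
    (fromBlocks a b c d * fromBlocks P Q (A * P) R').toBlocks₂₁ = (c + d * A) * P := by
  simp [fromBlocks_multiply, Matrix.add_mul, Matrix.mul_assoc]

end Blocks

theorem h_of_S_mul_iota_general (n : ℕ)
    (lam mu A Lam Lamb : Matrix (Fin n) (Fin n) ℂ)
    (hS : (fromBlocks lam mu (mu.map (starRingEnd ℂ)) (lam.map (starRingEnd ℂ)))ᵀ *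
        fromBlocks (0 : Matrix (Fin n) (Fin n) ℂ) (1 : Matrix (Fin n) (Fin n) ℂ)
          (-1 : Matrix (Fin n) (Fin n) ℂ) (0 : Matrix (Fin n) (Fin n) ℂ) *
        fromBlocks lam mu (mu.map (starRingEnd ℂ)) (lam.map (starRingEnd ℂ)) =
      fromBlocks (0 : Matrix (Fin n) (Fin n) ℂ) (1 : Matrix (Fin n) (Fin n) ℂ)
        (-1 : Matrix (Fin n) (Fin n) ℂ) (0 : Matrix (Fin n) (Fin n) ℂ))
    (hApd : ((1 : Matrix (Fin n) (Fin n) ℂ) - Aᴴ * A).PosDef)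
    (hLam : Lam.PosDef) :
    IsUnit (lam + mu * A) ∧
    IsUnit ((fromBlocks lam mu (mu.map (starRingEnd ℂ)) (lam.map (starRingEnd ℂ)) *
      fromBlocks Lam (Aᴴ * Lamb) (A * Lam) Lamb).toBlocks₁₁) ∧
    (fromBlocks lam mu (mu.map (starRingEnd ℂ)) (lam.map (starRingEnd ℂ)) *
        fromBlocks Lam (Aᴴ * Lamb) (A * Lam) Lamb).toBlocks₂₁ *
      ((fromBlocks lam mu (mu.map (starRingEnd ℂ)) (lam.map (starRingEnd ℂ)) *
        fromBlocks Lam (Aᴴ * Lamb) (A * Lam) Lamb).toBlocks₁₁)⁻¹ =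
      (lam.map (starRingEnd ℂ) * A + mu.map (starRingEnd ℂ)) * (mu * A + lam)⁻¹ := by
  have hB : IsUnit (lam + mu * A) := by
    refine isUnit_of_conjTranspose_mul_self_sub_posDef (C := mu.map (starRingEnd ℂ) +
      lam.map (starRingEnd ℂ) * A) ?_
    rwa [conjTranspose_mul_self_sub_eq_one_sub_of_mem_symplecticGroup lam mu A
      (mem_symplecticGroup_iff_transpose_mul_mul.2 hS)]
  rw [toBlocks₁₁_fromBlocks_mul_fromBlocks, toBlocks₂₁_fromBlocks_mul_fromBlocks]
  refine ⟨hB, hB.mul hLam.isUnit, ?_⟩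
  rw [Matrix.mul_inv_rev, Matrix.mul_assoc, mul_nonsing_inv_cancel_left _ _
    ((isUnit_iff_isUnit_det _).1 hLam.isUnit), add_comm (mu * A), add_comm (_ * A)]

/-- For `S = [[λ, μ], [conj μ, conj λ]]` complex symplectic and `A` complex
symmetric with `I − AᴴA` positive definite, with `ι(A) = [[Λ, AᴴΛ̄], [AΛ, Λ̄]]` built from
the positive definite inverse square roots `Λ = (I − AᴴA)^{−1/2}`, `Λ̄ = (I − AAᴴ)^{−1/2}`,
the matrix `λ + μA` is invertible, the upper-left block of `S·ι(A)` is invertible, and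
`h(S·ι(A)) = (conj(λ)A + conj(μ))(μA + λ)⁻¹` where `h([[a,b],[c,d]]) = c·a⁻¹`. -/
theorem h_of_S_mul_iota (n : ℕ) (hn : 0 < n)
    (lam mu A Lam Lamb : Matrix (Fin n) (Fin n) ℂ)
    (hS : (fromBlocks lam mu (mu.map (starRingEnd ℂ)) (lam.map (starRingEnd ℂ)))ᵀ *
        fromBlocks (0 : Matrix (Fin n) (Fin n) ℂ) (1 : Matrix (Fin n) (Fin n) ℂ)
          (-1 : Matrix (Fin n) (Fin n) ℂ) (0 : Matrix (Fin n) (Fin n) ℂ) *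
        fromBlocks lam mu (mu.map (starRingEnd ℂ)) (lam.map (starRingEnd ℂ)) =
      fromBlocks (0 : Matrix (Fin n) (Fin n) ℂ) (1 : Matrix (Fin n) (Fin n) ℂ)
        (-1 : Matrix (Fin n) (Fin n) ℂ) (0 : Matrix (Fin n) (Fin n) ℂ))
    (hA : Aᵀ = A) (hApd : ((1 : Matrix (Fin n) (Fin n) ℂ) - Aᴴ * A).PosDef)
    (hLam : Lam.PosDef)
    (hLamSq : Lam * Lam * ((1 : Matrix (Fin n) (Fin n) ℂ) - Aᴴ * A) = 1)
    (hLamb : Lamb.PosDef)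
    (hLambSq : Lamb * Lamb * ((1 : Matrix (Fin n) (Fin n) ℂ) - A * Aᴴ) = 1) :
    IsUnit (lam + mu * A) ∧
    IsUnit ((fromBlocks lam mu (mu.map (starRingEnd ℂ)) (lam.map (starRingEnd ℂ)) *
      fromBlocks Lam (Aᴴ * Lamb) (A * Lam) Lamb).toBlocks₁₁) ∧
    (fromBlocks lam mu (mu.map (starRingEnd ℂ)) (lam.map (starRingEnd ℂ)) *
        fromBlocks Lam (Aᴴ * Lamb) (A * Lam) Lamb).toBlocks₂₁ *
      ((fromBlocks lam mu (mu.map (starRingEnd ℂ)) (lam.map (starRingEnd ℂ)) *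
        fromBlocks Lam (Aᴴ * Lamb) (A * Lam) Lamb).toBlocks₁₁)⁻¹ =
      (lam.map (starRingEnd ℂ) * A + mu.map (starRingEnd ℂ)) * (mu * A + lam)⁻¹ :=
  h_of_S_mul_iota_general n lam mu A Lam Lamb hS hApd hLam
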